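/- Let G_1 be a graph on vertex set {1,…,m_1} and G_2 a graph on vertex set {m_1+1,…,m} where m = m_1 + m_2, and let G = G_1 + G_2 be their join. Let K_{m_1} denote the complete graph on {1,…,m_1} and K_{m_2} the complete graph on {m_1+1,…,m}. Then F_G = F_{G_1 + K_{m_2}} ∩ F_{K_{m_1} + G_2}, i.e., a function f : [m] → ℤ_{≥0} satisfies conditions (i) and (ii) for D(G) if and only if it satisfies them for both D(G_1 + K_{m_2}) and D(K_{m_1} + G_2). -/

import Mathlib

open SimpleGraph Polynomial

namespace PQPaper

instance instFintypeLex {α : Type*} [h : Fintype α] : Fintype (Lex α) := h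

/-- The bipartite graph `D(G)` on `V ⊕ V`: edges `{i, ī}` for every vertex `i`,
and `{i, j̄}`, `{ī, j}` for every edge `{i, j}` of `G`. -/
def DG {V : Type*} (G : SimpleGraph V) : SimpleGraph (V ⊕ V) :=
  SimpleGraph.fromRel fun a b =>
    match a, b with
    | Sum.inl i, Sum.inr j => i = j ∨ G.Adj i j
    | _, _ => False

/-- `f : V → ℕ` is a hypertree of the bipartite graph `H` on `V ⊕ W`
(with hyperedge side `V`): `H` has a spanning tree whose degree at each
left vertex `v` is `f v + 1`. -/
def IsHypertree {V W : Type*} (H : SimpleGraph (V ⊕ W)) (f : V → ℕ) : Prop :=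
  ∃ T : SimpleGraph (V ⊕ W), T ≤ H ∧ T.IsTree ∧
    ∀ v : V, (T.neighborSet (Sum.inl v)).ncard = f v + 1

/-- The set of hypertrees of `H`. -/
def HT {V W : Type*} (H : SimpleGraph (V ⊕ W)) : Set (V → ℕ) :=
  {f | IsHypertree H f}

/-- The set of internally inactive hyperedges of a hypertree `f`. -/
def inactive {V W : Type*} [LT V] (H : SimpleGraph (V ⊕ W)) (f : V → ℕ) : Set V :=
  {j | ∃ j', j' < j ∧ ∃ g : V → ℕ,
    g j' = f j' + 1 ∧ (g j : ℤ) = (f j : ℤ) - 1 ∧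
    (∀ i, i ≠ j' → i ≠ j → g i = f i) ∧ IsHypertree H g}

/-- The interior polynomial `I_H(x) = Σ_{f ∈ HT(H)} x^{ῑ(f)}`. -/
noncomputable def interiorPoly {V W : Type*} [Fintype V] [LinearOrder V]
    (H : SimpleGraph (V ⊕ W)) : Polynomial ℤ :=
  ∑ k ∈ Finset.range (Fintype.card V + 1),
    Polynomial.C ({f | f ∈ HT H ∧ (inactive H f).ncard = k}.ncard : ℤ) * Polynomial.X ^ k

/-- The perfectly matchable sets of a graph: vertex sets of matchings of `H`. -/
def PMSets {V : Type*} (H : SimpleGraph V) : Set (Set V) :=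
  {S | ∃ M : H.Subgraph, M.IsMatching ∧ M.verts = S}

/-- The perfectly matchable set polynomial `p(H,x) = Σ_k |PM(H,k)| x^k`. -/
noncomputable def pmsPoly {V : Type*} [Fintype V] (H : SimpleGraph V) : Polynomial ℤ :=
  ∑ k ∈ Finset.range (Fintype.card V + 1),
    Polynomial.C ({S | S ∈ PMSets H ∧ S.ncard = 2 * k}.ncard : ℤ) * Polynomial.X ^ k

/-- Join of two vertex-disjoint graphs. -/
def sumJoin {V W : Type*} (G : SimpleGraph V) (H : SimpleGraph W) : SimpleGraph (V ⊕ W) where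
  Adj a b :=
    match a, b with
    | Sum.inl x, Sum.inl y => G.Adj x y
    | Sum.inr x, Sum.inr y => H.Adj x y
    | Sum.inl _, Sum.inr _ => True
    | Sum.inr _, Sum.inl _ => True
  symm := by
    constructor
    rintro (x | x) (y | y) h
    · exact G.symm.symm _ _ h
    · exact trivial
    · exact trivial
    · exact H.symm.symm _ _ h
  loopless := by
    constructor
    rintro (x | x) h
    · exact G.loopless.irrefl x h
    · exact H.loopless.irrefl x h

/-- Join of a family of pairwise vertex-disjoint graphs. -/
def sigmaJoin {ι : Type*} {V : ι → Type*} (G : ∀ i, SimpleGraph (V i)) :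
    SimpleGraph (Σ i, V i) :=
  SimpleGraph.fromRel fun a b =>
    a.1 ≠ b.1 ∨ ∃ (i : ι) (x y : V i), a = ⟨i, x⟩ ∧ b = ⟨i, y⟩ ∧ (G i).Adj x y

/-- A copy of a graph on the lexicographic type synonym of its vertex type. -/
def lexify {α : Type*} (G : SimpleGraph α) : SimpleGraph (Lex α) :=
  G.map toLex.toEmbedding

/-- The polynomial
`f_{ℓ,m}(x) = Σ_{k=0}^{ℓ+m−1} Σ_{α=0}^{k} C(ℓ−1,k−α) C(m,α) Σ_{β=α}^{k} C(ℓ+α−1,β) C(m−α,k−β) x^k`. -/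
noncomputable def fPoly (l m : ℕ) : Polynomial ℤ :=
  ∑ k ∈ Finset.range (l + m),
    Polynomial.C (∑ a ∈ Finset.range (k + 1),
      ((l - 1).choose (k - a) : ℤ) * (m.choose a : ℤ) *
        ∑ b ∈ Finset.Icc a k, ((l + a - 1).choose b : ℤ) * ((m - a).choose (k - b) : ℤ)) *
      Polynomial.X ^ k

/-- The cycle graph on `n` vertices. -/
def cycG (n : ℕ) : SimpleGraph (Fin n) :=
  SimpleGraph.fromRel fun a b =>
    (b : ℕ) = (a : ℕ) + 1 ∨ ((a : ℕ) = n - 1 ∧ (b : ℕ) = 0)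

/-- `Γ(V')`: the set of neighbours in `D(H)` of the left vertices in `V'`,
viewed as a subset of the right copy `[m̄]`. -/
def Gam {m : ℕ} (H : SimpleGraph (Fin m)) (V' : Set (Fin m)) : Set (Fin m) :=
  {j | ∃ i ∈ V', (DG H).Adj (Sum.inl i) (Sum.inr j)}

/-- Condition (ii): `Σ_{i ∈ V'} f(i) ≤ |Γ(V')| − 1` for every nonempty `V' ⊆ [m]`. -/
def cond2 {m : ℕ} (H : SimpleGraph (Fin m)) (f : Fin m → ℕ) : Prop :=
  ∀ V' : Finset (Fin m), V'.Nonempty →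
    (∑ i ∈ V', f i) + 1 ≤ (Gam H (V' : Set (Fin m))).ncard

/-- `F_H`: functions satisfying conditions (i) and (ii) for `D(H)`. -/
def FSet {m : ℕ} (H : SimpleGraph (Fin m)) : Set (Fin m → ℕ) :=
  {f | (∑ i, f i) = m - 1 ∧ cond2 H f}

/-- `η_H(f)`: indices `j` admitting `j' < j` such that the transfer of one unit
from `j` to `j'` again satisfies condition (ii). -/
def eta {m : ℕ} (H : SimpleGraph (Fin m)) (f : Fin m → ℕ) : Set (Fin m) :=
  {j | ∃ j', j' < j ∧ ∃ g : Fin m → ℕ,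
    g j' = f j' + 1 ∧ (g j : ℤ) = (f j : ℤ) - 1 ∧
    (∀ i, i ≠ j' → i ≠ j → g i = f i) ∧ cond2 H g}

/-- `F_H(k) = {f ∈ F_H : |η_H(f)| = k}`. -/
def FSetK {m : ℕ} (H : SimpleGraph (Fin m)) (k : ℕ) : Set (Fin m → ℕ) :=
  {f | f ∈ FSet H ∧ (eta H f).ncard = k}

/-- All edges between `{1,…,m1}` and `{m1+1,…,m}` in `Fin m`. -/
def crossGraph (m m1 : ℕ) : SimpleGraph (Fin m) :=
  SimpleGraph.fromRel fun a b => (a : ℕ) < m1 ∧ m1 ≤ (b : ℕ)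

/-- The complete graph on the first `m1` vertices of `Fin m`. -/
def leftComplete (m m1 : ℕ) : SimpleGraph (Fin m) :=
  SimpleGraph.fromRel fun a b => (a : ℕ) < m1 ∧ (b : ℕ) < m1

/-- The complete graph on the last `m − m1` vertices of `Fin m`. -/
def rightComplete (m m1 : ℕ) : SimpleGraph (Fin m) :=
  SimpleGraph.fromRel fun a b => m1 ≤ (a : ℕ) ∧ m1 ≤ (b : ℕ)

/-- The tilde construction: a bipartite graph `H` on `V ⊕ W` together with two
new vertices `u = inr 0` and `w = inr 1`, where `u` is joined to all of `V` and
`w` is joined to all of `W` and to `u`. -/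
def tilde {V W : Type*} (H : SimpleGraph (V ⊕ W)) : SimpleGraph ((V ⊕ W) ⊕ Fin 2) :=
  SimpleGraph.fromRel fun a b =>
    (∃ x y, a = Sum.inl x ∧ b = Sum.inl y ∧ H.Adj x y) ∨
    (∃ i : V, a = Sum.inl (Sum.inl i) ∧ b = Sum.inr 0) ∨
    (∃ j : W, a = Sum.inl (Sum.inr j) ∧ b = Sum.inr 1) ∨
    (a = Sum.inr 0 ∧ b = Sum.inr 1)


/-! Condition (ii) only gets weaker when edges are added, and `G = G₁ + G₂` is a subgraph of both
`G₁ + K_{m₂}` and `K_{m₁} + G₂`; this gives `⊆`. Conversely, let `V' ≠ ∅`. If `V'` has a vertex on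
each side of the join, the cross edges alone give `Γ(V') = [m̄]`, and (ii) follows from (i). If
`V' ⊆ {1,…,m₁}`, every edge of `G₁ + K_{m₂}` leaving `V'` is an edge of `G`, so (ii) for
`G₁ + K_{m₂}` gives (ii) for `G` at `V'`; symmetrically for `V' ⊆ {m₁+1,…,m}`. -/

lemma DG_adj_inl_inr {V : Type*} (H : SimpleGraph V) (i j : V) :
    (DG H).Adj (Sum.inl i) (Sum.inr j) ↔ i = j ∨ H.Adj i j := by
  simp [DG, SimpleGraph.fromRel_adj]

section Gam

variable {m : ℕ}

lemma mem_Gam {H : SimpleGraph (Fin m)} {V' : Set (Fin m)} {j : Fin m} :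
    j ∈ Gam H V' ↔ ∃ i ∈ V', i = j ∨ H.Adj i j := by
  simp [Gam, DG_adj_inl_inr]

lemma Gam_subset_Gam {H K : SimpleGraph (Fin m)} {V' : Set (Fin m)}
    (h : ∀ i ∈ V', ∀ j, H.Adj i j → K.Adj i j) : Gam H V' ⊆ Gam K V' := by
  intro j hj
  obtain ⟨i, hi, hij⟩ := mem_Gam.mp hj
  exact mem_Gam.mpr ⟨i, hi, hij.imp_right (h i hi j)⟩

lemma sum_add_one_le_ncard_Gam_of_adj_imp {H K : SimpleGraph (Fin m)} {f : Fin m → ℕ}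
    (hH : cond2 H f) {V' : Finset (Fin m)} (hV' : V'.Nonempty)
    (h : ∀ i ∈ V', ∀ j, H.Adj i j → K.Adj i j) :
    (∑ i ∈ V', f i) + 1 ≤ (Gam K (V' : Set (Fin m))).ncard :=
  (hH V' hV').trans (Set.ncard_le_ncard (Gam_subset_Gam h) (Set.toFinite _))

lemma FSet_mono {H K : SimpleGraph (Fin m)} (hHK : H ≤ K) : FSet H ⊆ FSet K :=
  fun _ ⟨hsum, hH⟩ =>
    ⟨hsum, fun _ hV' => sum_add_one_le_ncard_Gam_of_adj_imp hH hV' fun _ _ _ hij => hHK hij⟩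

lemma sum_add_one_le_ncard_Gam_of_eq_univ {H : SimpleGraph (Fin m)} {f : Fin m → ℕ}
    (hsum : ∑ i, f i = m - 1) {V' : Finset (Fin m)} (hV' : V'.Nonempty)
    (hΓ : Gam H (V' : Set (Fin m)) = Set.univ) :
    (∑ i ∈ V', f i) + 1 ≤ (Gam H (V' : Set (Fin m))).ncard := by
  obtain ⟨x, -⟩ := hV'
  have hle : ∑ i ∈ V', f i ≤ ∑ i, f i := Finset.sum_le_sum_of_subset (Finset.subset_univ _)
  rw [hΓ, Set.ncard_univ, Nat.card_eq_fintype_card, Fintype.card_fin]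
  have := x.pos
  omega

end Gam

section Join

variable {m m1 : ℕ} {i j : Fin m}

lemma leftComplete_adj :
    (leftComplete m m1).Adj i j ↔ i ≠ j ∧ (i : ℕ) < m1 ∧ (j : ℕ) < m1 := by
  simp only [leftComplete, SimpleGraph.fromRel_adj]
  tauto

lemma rightComplete_adj :
    (rightComplete m m1).Adj i j ↔ i ≠ j ∧ m1 ≤ (i : ℕ) ∧ m1 ≤ (j : ℕ) := by
  simp only [rightComplete, SimpleGraph.fromRel_adj]
  tauto

lemma rightComplete_not_adj (hi : (i : ℕ) < m1) : ¬ (rightComplete m m1).Adj i j :=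
  fun h => by have := (rightComplete_adj.mp h).2.1; omega

lemma leftComplete_not_adj (hi : m1 ≤ (i : ℕ)) : ¬ (leftComplete m m1).Adj i j :=
  fun h => by have := (leftComplete_adj.mp h).2.1; omega

lemma crossGraph_adj :
    (crossGraph m m1).Adj i j ↔ i ≠ j ∧
      ((i : ℕ) < m1 ∧ m1 ≤ (j : ℕ) ∨ (j : ℕ) < m1 ∧ m1 ≤ (i : ℕ)) := by
  simp only [crossGraph, SimpleGraph.fromRel_adj]

lemma le_leftComplete {G : SimpleGraph (Fin m)}
    (hG : ∀ i j, G.Adj i j → (i : ℕ) < m1 ∧ (j : ℕ) < m1) : G ≤ leftComplete m m1 :=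
  fun i j hij => leftComplete_adj.mpr ⟨hij.ne, hG i j hij⟩

lemma le_rightComplete {G : SimpleGraph (Fin m)}
    (hG : ∀ i j, G.Adj i j → m1 ≤ (i : ℕ) ∧ m1 ≤ (j : ℕ)) : G ≤ rightComplete m m1 :=
  fun i j hij => rightComplete_adj.mpr ⟨hij.ne, hG i j hij⟩

lemma Gam_crossGraph_eq_univ {V' : Set (Fin m)} {a b : Fin m} (ha : a ∈ V') (ham : (a : ℕ) < m1)
    (hb : b ∈ V') (hbm : m1 ≤ (b : ℕ)) : Gam (crossGraph m m1) V' = Set.univ := by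
  refine Set.eq_univ_of_forall fun j => mem_Gam.mpr ?_
  rcases lt_or_ge (j : ℕ) m1 with hj | hj
  · exact ⟨b, hb, Or.inr (crossGraph_adj.mpr ⟨fun h => by omega, Or.inr ⟨hj, hbm⟩⟩)⟩
  · exact ⟨a, ha, Or.inr (crossGraph_adj.mpr ⟨fun h => by omega, Or.inl ⟨ham, hj⟩⟩)⟩

end Join

theorem FSet_join_inter_general (m1 m : ℕ)
    (G1 G2 : SimpleGraph (Fin m))
    (hG1 : ∀ i j, G1.Adj i j → (i : ℕ) < m1 ∧ (j : ℕ) < m1)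
    (hG2 : ∀ i j, G2.Adj i j → m1 ≤ (i : ℕ) ∧ m1 ≤ (j : ℕ)) :
    FSet (G1 ⊔ G2 ⊔ crossGraph m m1) =
      FSet (G1 ⊔ rightComplete m m1 ⊔ crossGraph m m1) ∩
        FSet (leftComplete m m1 ⊔ G2 ⊔ crossGraph m m1) := by
  refine Set.Subset.antisymm (fun f hf => ⟨FSet_mono ?_ hf, FSet_mono ?_ hf⟩) ?_
  · exact sup_le_sup_right (sup_le_sup_left (le_rightComplete hG2) _) _
  · exact sup_le_sup_right (sup_le_sup_right (le_leftComplete hG1) _) _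
  rintro f ⟨⟨hsum, hL⟩, -, hR⟩
  refine ⟨hsum, fun V' hV' => ?_⟩
  by_cases hleft : ∀ i ∈ V', (i : ℕ) < m1
  · refine sum_add_one_le_ncard_Gam_of_adj_imp hL hV' fun i hi j hij => ?_
    have := rightComplete_not_adj (j := j) (hleft i hi)
    simp only [SimpleGraph.sup_adj] at hij ⊢
    tauto
  by_cases hright : ∀ i ∈ V', m1 ≤ (i : ℕ)
  · refine sum_add_one_le_ncard_Gam_of_adj_imp hR hV' fun i hi j hij => ?_
    have := leftComplete_not_adj (j := j) (hright i hi)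
    simp only [SimpleGraph.sup_adj] at hij ⊢
    tauto
  push Not at hleft hright
  obtain ⟨b, hb, hbm⟩ := hleft
  obtain ⟨a, ha, ham⟩ := hright
  refine sum_add_one_le_ncard_Gam_of_eq_univ hsum hV' (Set.univ_subset_iff.mp ?_)
  rw [← Gam_crossGraph_eq_univ (m1 := m1) (Finset.mem_coe.mpr ha) ham (Finset.mem_coe.mpr hb) hbm]
  exact Gam_subset_Gam fun _ _ _ hij => Or.inr hij

/-- For `G₁` supported on `{1,…,m₁}` and `G₂` supported on
`{m₁+1,…,m}` with `m = m₁ + m₂`, one has `F_{G₁+G₂} = F_{G₁+K_{m₂}} ∩ F_{K_{m₁}+G₂}`. -/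
theorem FSet_join_inter (m1 m2 m : ℕ) (hm : m = m1 + m2)
    (G1 G2 : SimpleGraph (Fin m))
    (hG1 : ∀ i j, G1.Adj i j → (i : ℕ) < m1 ∧ (j : ℕ) < m1)
    (hG2 : ∀ i j, G2.Adj i j → m1 ≤ (i : ℕ) ∧ m1 ≤ (j : ℕ)) :
    FSet (G1 ⊔ G2 ⊔ crossGraph m m1) =
      FSet (G1 ⊔ rightComplete m m1 ⊔ crossGraph m m1) ∩
        FSet (leftComplete m m1 ⊔ G2 ⊔ crossGraph m m1) :=
  FSet_join_inter_general m1 m G1 G2 hG1 hG2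

end PQPaper
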